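/- For any norm ‖·‖ on ℝⁿ, any bounded Ψ ⊆ ℝ₊^{n×n}, and any m ≥ 1: (sup_{A ∈ Ψ_⊗^m} μ(A))^{1/m} ≤ μ(Ψ) ≤ (sup_{A ∈ Ψ_⊗^m} η_‖·‖(A))^{1/m}. -/

import Mathlib

open scoped BigOperators

namespace MaxAlg

variable {n : ℕ}

/-- max-algebraic matrix product: (A ⊗ B) i j = max_k A i k * B k j -/
noncomputable def maxMul (A B : Fin n → Fin n → ℝ) : Fin n → Fin n → ℝ :=
  fun i j => ⨆ k : Fin n, A i k * B k j

/-- max-algebraic matrix-vector product -/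
noncomputable def maxVec (A : Fin n → Fin n → ℝ) (x : Fin n → ℝ) : Fin n → ℝ :=
  fun i => ⨆ j : Fin n, A i j * x j

/-- the identity matrix -/
def idMat (n : ℕ) : Fin n → Fin n → ℝ := fun i j => if i = j then 1 else 0

/-- maximal cycle geometric mean: max over simple cycles of the geometric
mean of the corresponding entries -/
noncomputable def mu (A : Fin n → Fin n → ℝ) : ℝ :=
  ⨆ k : Fin n, ⨆ c : {f : Fin (k.1 + 1) → Fin n // Function.Injective f},
    (∏ j : Fin (k.1 + 1), A (c.1 j) (c.1 (j + 1))) ^ ((1 : ℝ) / ((k.1 : ℝ) + 1))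

/-- entrywise supremum S(Ψ) of a set of matrices -/
noncomputable def Ssup (Ψ : Set (Fin n → Fin n → ℝ)) : Fin n → Fin n → ℝ :=
  fun i j => sSup ((fun A => A i j) '' Ψ)

/-- max-algebraic joint spectral radius, via μ(Ψ) = μ(S(Ψ)) -/
noncomputable def muSet (Ψ : Set (Fin n → Fin n → ℝ)) : ℝ := mu (Ssup Ψ)

/-- irreducibility of a nonnegative matrix -/
def Irred (A : Fin n → Fin n → ℝ) : Prop :=
  ∀ I : Set (Fin n), I.Nonempty → I ≠ Set.univ → ∃ i ∈ I, ∃ j, j ∉ I ∧ A i j ≠ 0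

/-- max-convex hull: finite combinations ⊕ αᵢ Aᵢ with αᵢ ≥ 0 and max αᵢ = 1 -/
def maxConv (M : Set (Fin n → Fin n → ℝ)) : Set (Fin n → Fin n → ℝ) :=
  {B | ∃ (k : ℕ) (α : Fin (k + 1) → ℝ) (A : Fin (k + 1) → (Fin n → Fin n → ℝ)),
    (∀ i, 0 ≤ α i) ∧ (∀ i, A i ∈ M) ∧ (⨆ i, α i) = 1 ∧
    B = fun i j => ⨆ l, α l * A l i j}

/-- max-span (max cone): finite combinations ⊕ αᵢ Aᵢ with αᵢ ≥ 0 -/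
def maxSpan (M : Set (Fin n → Fin n → ℝ)) : Set (Fin n → Fin n → ℝ) :=
  {B | ∃ (k : ℕ) (α : Fin (k + 1) → ℝ) (A : Fin (k + 1) → (Fin n → Fin n → ℝ)),
    (∀ i, 0 ≤ α i) ∧ (∀ i, A i ∈ M) ∧
    B = fun i j => ⨆ l, α l * A l i j}

/-- Ψ_⊗^m : set of max-products of m matrices from Ψ (Ψ_⊗^0 = {I}) -/
noncomputable def prodSet (Ψ : Set (Fin n → Fin n → ℝ)) : ℕ → Set (Fin n → Fin n → ℝ)
  | 0 => {idMat n}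
  | m + 1 => {C | ∃ A ∈ Ψ, ∃ B ∈ prodSet Ψ m, C = maxMul A B}

/-- a norm on ℝⁿ -/
structure NormOn (n : ℕ) where
  f : (Fin n → ℝ) → ℝ
  eq_zero : ∀ x, f x = 0 ↔ x = 0
  smul : ∀ (a : ℝ) (x : Fin n → ℝ), f (a • x) = |a| * f x
  add : ∀ x y : Fin n → ℝ, f (x + y) ≤ f x + f y

/-- a norm is monotone if |x| ≤ |y| entrywise implies ν(x) ≤ ν(y) -/
def NormOn.Mono (N : NormOn n) : Prop :=
  ∀ x y : Fin n → ℝ, (∀ i, |x i| ≤ |y i|) → N.f x ≤ N.f y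

/-- max-induced matrix norm η_‖·‖(A) = sup{‖A ⊗ x‖/‖x‖ : x ∈ ℝ₊ⁿ, x ≠ 0} -/
noncomputable def eta (N : NormOn n) (A : Fin n → Fin n → ℝ) : ℝ :=
  ⨆ x : {x : Fin n → ℝ // (∀ i, 0 ≤ x i) ∧ x ≠ 0}, N.f (maxVec A x.1) / N.f x.1



-- ===== generic finite iSup helpers over ℝ =====

lemma bddAbove_range_fin {ι : Type*} [Finite ι] (f : ι → ℝ) : BddAbove (Set.range f) :=
  (Set.finite_range f).bddAbove

lemma le_fin_iSup {ι : Type*} [Finite ι] (f : ι → ℝ) (i : ι) : f i ≤ ⨆ j, f j :=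
  le_ciSup (bddAbove_range_fin f) i

lemma fin_iSup_le {ι : Type*} [Nonempty ι] (f : ι → ℝ) {a : ℝ} (h : ∀ i, f i ≤ a) :
    ⨆ i, f i ≤ a := ciSup_le h

lemma fin_iSup_nonneg {ι : Type*} [Finite ι] [Nonempty ι] (f : ι → ℝ)
    (h : ∀ i, 0 ≤ f i) : 0 ≤ ⨆ i, f i := by
  obtain ⟨i⟩ := ‹Nonempty ι›
  exact le_trans (h i) (le_fin_iSup f i)

lemma fin_iSup_mul {ι : Type*} [Finite ι] [Nonempty ι] (f : ι → ℝ) {c : ℝ} (hc : 0 ≤ c) :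
    (⨆ i, f i) * c = ⨆ i, f i * c := by
  obtain ⟨i0, hi0⟩ := Finite.exists_max f
  have h1 : (⨆ i, f i) = f i0 := le_antisymm (fin_iSup_le f hi0) (le_fin_iSup f i0)
  refine le_antisymm ?_ (fin_iSup_le _ fun i => mul_le_mul_of_nonneg_right ?_ hc)
  · rw [h1]; exact le_fin_iSup (fun i => f i * c) i0
  · rw [h1]; exact hi0 i

lemma fin_mul_iSup {ι : Type*} [Finite ι] [Nonempty ι] (f : ι → ℝ) {c : ℝ} (hc : 0 ≤ c) :
    c * (⨆ i, f i) = ⨆ i, c * f i := by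
  rw [mul_comm, fin_iSup_mul f hc]
  simp [mul_comm]

lemma fin_iSup_comm {ι κ : Type*} [Finite ι] [Nonempty ι] [Finite κ] [Nonempty κ]
    (f : ι → κ → ℝ) : ⨆ i, ⨆ j, f i j = ⨆ j, ⨆ i, f i j := by
  refine le_antisymm ?_ ?_
  · refine fin_iSup_le _ fun a => fin_iSup_le _ fun b => ?_
    exact le_trans (le_fin_iSup (fun i => f i b) a) (le_fin_iSup (fun b => ⨆ i, f i b) b)
  · refine fin_iSup_le _ fun b => fin_iSup_le _ fun a => ?_
    exact le_trans (le_fin_iSup (fun j => f a j) b) (le_fin_iSup (fun a => ⨆ j, f a j) a)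

lemma fin_iSup_mono {ι : Type*} [Finite ι] [Nonempty ι] {f g : ι → ℝ}
    (h : ∀ i, f i ≤ g i) : ⨆ i, f i ≤ ⨆ i, g i :=
  fin_iSup_le _ fun i => le_trans (h i) (le_fin_iSup g i)

-- attained
lemma fin_iSup_attained {ι : Type*} [Finite ι] [Nonempty ι] (f : ι → ℝ) :
    ∃ i, (⨆ j, f j) = f i := by
  obtain ⟨i0, hi0⟩ := Finite.exists_max f
  exact ⟨i0, le_antisymm (fin_iSup_le f hi0) (le_fin_iSup f i0)⟩

-- ===== norm basics =====

lemma NormOn.zero (N : NormOn n) : N.f 0 = 0 := (N.eq_zero 0).mpr rfl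

lemma NormOn.neg (N : NormOn n) (x : Fin n → ℝ) : N.f (-x) = N.f x := by
  have := N.smul (-1) x; simpa using this

lemma NormOn.nonneg (N : NormOn n) (x : Fin n → ℝ) : 0 ≤ N.f x := by
  have h := N.add x (-x)
  rw [add_neg_cancel, N.zero, NormOn.neg] at h
  linarith

lemma NormOn.pos (N : NormOn n) {x : Fin n → ℝ} (hx : x ≠ 0) : 0 < N.f x :=
  lt_of_le_of_ne (N.nonneg x) (fun h => hx ((N.eq_zero x).mp h.symm))

lemma NormOn.sum_le (N : NormOn n) {ι : Type*} (s : Finset ι) (g : ι → (Fin n → ℝ)) :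
    N.f (∑ i ∈ s, g i) ≤ ∑ i ∈ s, N.f (g i) := by
  classical
  induction s using Finset.induction with
  | empty => simp [N.zero]
  | insert _ _ h ih =>
      rw [Finset.sum_insert h, Finset.sum_insert h]
      exact le_trans (N.add _ _) (by linarith)

/-- the coordinate vectors -/
noncomputable def eVec (i : Fin n) : Fin n → ℝ := Pi.single i 1

lemma eVec_ne_zero (i : Fin n) : eVec i ≠ 0 := by
  intro h
  have : (eVec i) i = 0 := by rw [h]; rfl
  simp [eVec] at this

lemma NormOn.le_sum_coords (N : NormOn n) (u : Fin n → ℝ) :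
    N.f u ≤ ∑ i, |u i| * N.f (eVec i) := by
  have hu : u = ∑ i, (u i) • eVec i := by
    funext j
    simp [eVec, Pi.single_apply, Finset.sum_ite_eq, mul_comm]
  calc N.f u = N.f (∑ i, (u i) • eVec i) := by rw [← hu]
    _ ≤ ∑ i, N.f ((u i) • eVec i) := N.sum_le _ _
    _ = ∑ i, |u i| * N.f (eVec i) := by simp [N.smul]

-- ===== norm equivalence: coordinates bounded by the norm =====

def NS {n : ℕ} (_N : NormOn n) : Type := Fin n → ℝ

noncomputable instance (N : NormOn n) : AddCommGroup (NS N) := inferInstanceAs (AddCommGroup (Fin n → ℝ))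
noncomputable instance (N : NormOn n) : Module ℝ (NS N) := inferInstanceAs (Module ℝ (Fin n → ℝ))

noncomputable instance (N : NormOn n) : NormedAddCommGroup (NS N) :=
  AddGroupNorm.toNormedAddCommGroup
    { toFun := fun x => N.f x
      map_zero' := N.zero
      add_le' := N.add
      neg' := N.neg
      eq_zero_of_map_eq_zero' := fun x h => (N.eq_zero x).mp h }

lemma NS_norm (N : NormOn n) (x : NS N) : ‖x‖ = N.f x := rfl

noncomputable instance (N : NormOn n) : NormedSpace ℝ (NS N) :=
  ⟨fun a x => le_of_eq (N.smul a x)⟩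

instance (N : NormOn n) : FiniteDimensional ℝ (NS N) :=
  inferInstanceAs (FiniteDimensional ℝ (Fin n → ℝ))

lemma coord_bound (N : NormOn n) : ∃ C : ℝ, 0 < C ∧ ∀ (u : Fin n → ℝ) (i : Fin n),
    |u i| ≤ C * N.f u := by
  have hcont : ∀ i : Fin n, ∃ Ci : ℝ, ∀ u : NS N, |u i| ≤ Ci * ‖u‖ := by
    intro i
    let g : NS N →ₗ[ℝ] ℝ := LinearMap.proj i
    let gc : NS N →L[ℝ] ℝ := LinearMap.toContinuousLinearMap g
    exact ⟨‖gc‖, fun u => by have h := gc.le_opNorm u; exact h⟩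
  choose C hC using hcont
  refine ⟨1 + ∑ i, |C i|, by positivity, fun u i => ?_⟩
  have h1 : |u i| ≤ C i * N.f u := hC i u
  have h2 : C i ≤ 1 + ∑ j, |C j| := by
    have : |C i| ≤ ∑ j, |C j| :=
      Finset.single_le_sum (fun j _ => abs_nonneg (C j)) (Finset.mem_univ i)
    calc C i ≤ |C i| := le_abs_self _
      _ ≤ 1 + ∑ j, |C j| := by linarith
  exact le_trans h1 (mul_le_mul_of_nonneg_right h2 (N.nonneg u))


-- ===== rpow helpers =====

lemma rpow_inv_nat_pow {x : ℝ} (hx : 0 ≤ x) {L : ℕ} (hL : L ≠ 0) :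
    (x ^ ((1 : ℝ) / (L : ℝ))) ^ L = x := by
  rw [← Real.rpow_natCast (x ^ ((1 : ℝ) / (L : ℝ))) L, ← Real.rpow_mul hx]
  rw [one_div, inv_mul_cancel₀ (by exact_mod_cast hL), Real.rpow_one]

lemma pow_rpow_inv_nat {x : ℝ} (hx : 0 ≤ x) {L : ℕ} (hL : L ≠ 0) :
    (x ^ L) ^ ((1 : ℝ) / (L : ℝ)) = x := by
  rw [← Real.rpow_natCast x L, ← Real.rpow_mul hx]
  rw [mul_one_div, div_self (by exact_mod_cast hL), Real.rpow_one]

lemma le_pow_of_rpow_le {x μ : ℝ} (hx : 0 ≤ x) {L : ℕ} (hL : L ≠ 0)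
    (h : x ^ ((1 : ℝ) / (L : ℝ)) ≤ μ) : x ≤ μ ^ L := by
  calc x = (x ^ ((1 : ℝ) / (L : ℝ))) ^ L := (rpow_inv_nat_pow hx hL).symm
    _ ≤ μ ^ L := pow_le_pow_left₀ (Real.rpow_nonneg hx _) h L

lemma rpow_le_of_le_pow {x μ : ℝ} (hx : 0 ≤ x) (hμ : 0 ≤ μ) {L : ℕ} (hL : L ≠ 0)
    (h : x ≤ μ ^ L) : x ^ ((1 : ℝ) / (L : ℝ)) ≤ μ := by
  calc x ^ ((1 : ℝ) / (L : ℝ)) ≤ (μ ^ L) ^ ((1 : ℝ) / (L : ℝ)) :=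
        Real.rpow_le_rpow hx h (by positivity)
    _ = μ := pow_rpow_inv_nat hμ hL

-- ===== matrix basics =====

lemma idMat_nonneg : ∀ i j, 0 ≤ idMat n i j := by
  intro i j; unfold idMat; split_ifs <;> norm_num

lemma maxVec_nonneg {A : Fin n → Fin n → ℝ} {x : Fin n → ℝ}
    (hA : ∀ i j, 0 ≤ A i j) (hx : ∀ i, 0 ≤ x i) : ∀ i, 0 ≤ maxVec A x i := by
  intro i
  exact le_trans (mul_nonneg (hA i i) (hx i)) (le_fin_iSup (fun j => A i j * x j) i)

lemma maxMul_nonneg {A B : Fin n → Fin n → ℝ}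
    (hA : ∀ i j, 0 ≤ A i j) (hB : ∀ i j, 0 ≤ B i j) : ∀ i j, 0 ≤ maxMul A B i j := by
  intro i j
  exact le_trans (mul_nonneg (hA i i) (hB i j)) (le_fin_iSup (fun k => A i k * B k j) i)

lemma maxMul_entry_le {A B : Fin n → Fin n → ℝ} (i k j : Fin n) :
    A i k * B k j ≤ maxMul A B i j := le_fin_iSup (fun k => A i k * B k j) k

lemma maxVec_single {A : Fin n → Fin n → ℝ} (hA : ∀ i j, 0 ≤ A i j) (j : Fin n) :
    maxVec A (eVec j) = fun i => A i j := by
  funext i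
  have : Nonempty (Fin n) := ⟨i⟩
  show ⨆ l, A i l * eVec j l = A i j
  refine le_antisymm (fin_iSup_le _ fun l => ?_) ?_
  · rcases eq_or_ne l j with rfl | hl
    · simp [eVec]
    · simp [eVec, Pi.single_apply, hl, hA]
  · have h := le_fin_iSup (fun l => A i l * eVec j l) j
    simpa [eVec] using h

lemma maxVec_zero {A : Fin n → Fin n → ℝ} (i : Fin n) : maxVec A 0 i = 0 := by
  have : Nonempty (Fin n) := ⟨i⟩
  simp [maxVec, ciSup_const]

lemma maxVec_idMat {x : Fin n → ℝ} (hx : ∀ i, 0 ≤ x i) : maxVec (idMat n) x = x := by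
  funext i
  have : Nonempty (Fin n) := ⟨i⟩
  show ⨆ l, idMat n i l * x l = x i
  refine le_antisymm (fin_iSup_le _ fun l => ?_) ?_
  · rcases eq_or_ne i l with rfl | hl
    · simp [idMat]
    · simp [idMat, hl, hx]
  · have h := le_fin_iSup (fun l => idMat n i l * x l) i
    simpa [idMat] using h

lemma maxMul_idMat_right {A : Fin n → Fin n → ℝ} (hA : ∀ i j, 0 ≤ A i j) :
    maxMul A (idMat n) = A := by
  funext i j
  have : Nonempty (Fin n) := ⟨i⟩
  show ⨆ l, A i l * idMat n l j = A i j
  refine le_antisymm (fin_iSup_le _ fun l => ?_) ?_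
  · rcases eq_or_ne l j with rfl | hl
    · simp [idMat]
    · simp [idMat, hl, hA]
  · have h := le_fin_iSup (fun l => A i l * idMat n l j) j
    simpa [idMat] using h

lemma maxMul_idMat_left {B : Fin n → Fin n → ℝ} (hB : ∀ i j, 0 ≤ B i j) :
    maxMul (idMat n) B = B := by
  funext i j
  have : Nonempty (Fin n) := ⟨i⟩
  show ⨆ l, idMat n i l * B l j = B i j
  refine le_antisymm (fin_iSup_le _ fun l => ?_) ?_
  · rcases eq_or_ne i l with rfl | hl
    · simp [idMat]
    · simp [idMat, hl, hB]
  · have h := le_fin_iSup (fun l => idMat n i l * B l j) i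
    simpa [idMat] using h

lemma maxVec_assoc {A B : Fin n → Fin n → ℝ} {x : Fin n → ℝ}
    (hA : ∀ i j, 0 ≤ A i j) (hx : ∀ i, 0 ≤ x i) :
    maxVec (maxMul A B) x = maxVec A (maxVec B x) := by
  funext i
  have : Nonempty (Fin n) := ⟨i⟩
  have h1 : maxVec (maxMul A B) x i = ⨆ j, ⨆ k, A i k * B k j * x j := by
    unfold maxVec maxMul
    exact iSup_congr fun j => fin_iSup_mul (fun k => A i k * B k j) (hx j)
  have h2 : maxVec A (maxVec B x) i = ⨆ k, ⨆ j, A i k * (B k j * x j) := by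
    unfold maxVec
    exact iSup_congr fun k => fin_mul_iSup (fun j => B k j * x j) (hA i k)
  rw [h1, h2, fin_iSup_comm]
  exact iSup_congr fun k => iSup_congr fun j => mul_assoc _ _ _

lemma maxMul_assoc {A B C : Fin n → Fin n → ℝ}
    (hA : ∀ i j, 0 ≤ A i j) (hC : ∀ i j, 0 ≤ C i j) :
    maxMul (maxMul A B) C = maxMul A (maxMul B C) := by
  funext i j
  have : Nonempty (Fin n) := ⟨i⟩
  have h1 : maxMul (maxMul A B) C i j = ⨆ l, ⨆ k, A i k * B k l * C l j := by
    unfold maxMul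
    exact iSup_congr fun l => fin_iSup_mul (fun k => A i k * B k l) (hC l j)
  have h2 : maxMul A (maxMul B C) i j = ⨆ k, ⨆ l, A i k * (B k l * C l j) := by
    unfold maxMul
    exact iSup_congr fun k => fin_mul_iSup (fun l => B k l * C l j) (hA i k)
  rw [h1, h2, fin_iSup_comm]
  exact iSup_congr fun k => iSup_congr fun l => mul_assoc _ _ _

lemma maxMul_mono {A A' B B' : Fin n → Fin n → ℝ}
    (hA : ∀ i j, 0 ≤ A i j) (hB : ∀ i j, 0 ≤ B i j)
    (h1 : ∀ i j, A i j ≤ A' i j) (h2 : ∀ i j, B i j ≤ B' i j) :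
    ∀ i j, maxMul A B i j ≤ maxMul A' B' i j := by
  intro i j
  have : Nonempty (Fin n) := ⟨i⟩
  show ⨆ k, A i k * B k j ≤ maxMul A' B' i j
  refine fin_iSup_le _ fun k => le_trans ?_ (le_fin_iSup (fun k => A' i k * B' k j) k)
  exact mul_le_mul (h1 i k) (h2 k j) (hB k j) (le_trans (hA i k) (h1 i k))

-- ===== chains of products =====

noncomputable def chain (F : ℕ → (Fin n → Fin n → ℝ)) : ℕ → ℕ → (Fin n → Fin n → ℝ)
  | _, 0 => idMat n
  | a, s + 1 => maxMul (F a) (chain F (a + 1) s)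

lemma chain_nonneg (F : ℕ → (Fin n → Fin n → ℝ)) (hF : ∀ t i j, 0 ≤ F t i j) :
    ∀ s a i j, 0 ≤ chain F a s i j := by
  intro s
  induction s with
  | zero => intro a i j; exact idMat_nonneg i j
  | succ s ih => intro a i j; exact maxMul_nonneg (hF a) (fun i j => ih (a + 1) i j) i j

lemma chain_mem {Ψ : Set (Fin n → Fin n → ℝ)} {F : ℕ → (Fin n → Fin n → ℝ)}
    (hF : ∀ t, F t ∈ Ψ) : ∀ s a, chain F a s ∈ prodSet Ψ s := by
  intro s
  induction s with
  | zero => intro a; exact rfl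
  | succ s ih => intro a; exact ⟨F a, hF a, chain F (a + 1) s, ih (a + 1), rfl⟩

lemma chain_split (F : ℕ → (Fin n → Fin n → ℝ)) (hF : ∀ t i j, 0 ≤ F t i j) :
    ∀ s t a, chain F a (s + t) = maxMul (chain F a s) (chain F (a + s) t) := by
  intro s
  induction s with
  | zero =>
      intro t a
      simp only [Nat.zero_add, Nat.add_zero]
      exact (maxMul_idMat_left (chain_nonneg F hF t a)).symm
  | succ s ih =>
      intro t a
      have e1 : s + 1 + t = (s + t) + 1 := by omega
      have e2 : a + (s + 1) = (a + 1) + s := by omega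
      rw [e1]
      show maxMul (F a) (chain F (a + 1) (s + t)) = _
      rw [ih t (a + 1), e2]
      exact (maxMul_assoc (hF a) (chain_nonneg F hF t ((a + 1) + s))).symm

lemma chain_entry_ge (F : ℕ → (Fin n → Fin n → ℝ)) (hF : ∀ t i j, 0 ≤ F t i j)
    (w : ℕ → Fin n) :
    ∀ s a, ∏ t ∈ Finset.range s, F (a + t) (w (a + t)) (w (a + t + 1))
      ≤ chain F a s (w a) (w (a + s)) := by
  intro s
  induction s with
  | zero => intro a; simp [chain, idMat]
  | succ s ih =>
      intro a
      have hsplit : ∏ t ∈ Finset.range (s + 1), F (a + t) (w (a + t)) (w (a + t + 1))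
          = F a (w a) (w (a + 1)) *
            ∏ t ∈ Finset.range s, F (a + 1 + t) (w (a + 1 + t)) (w (a + 1 + t + 1)) := by
        rw [Finset.prod_range_succ' (fun t => F (a + t) (w (a + t)) (w (a + t + 1))) s,
          mul_comm]
        congr 1
        exact Finset.prod_congr rfl fun t _ => by rw [show a + (t + 1) = a + 1 + t by omega]
      calc ∏ t ∈ Finset.range (s + 1), F (a + t) (w (a + t)) (w (a + t + 1))
          = F a (w a) (w (a + 1)) *
            ∏ t ∈ Finset.range s, F (a + 1 + t) (w (a + 1 + t)) (w (a + 1 + t + 1)) := hsplit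
        _ ≤ F a (w a) (w (a + 1)) * chain F (a + 1) s (w (a + 1)) (w (a + 1 + s)) :=
            mul_le_mul_of_nonneg_left (ih (a + 1)) (hF a _ _)
        _ ≤ chain F a (s + 1) (w a) (w (a + (s + 1))) := by
            rw [show a + (s + 1) = a + 1 + s by omega]
            exact maxMul_entry_le (w a) (w (a + 1)) (w (a + 1 + s))

-- ===== powers of a single matrix =====

noncomputable def matPow (S : Fin n → Fin n → ℝ) : ℕ → (Fin n → Fin n → ℝ)
  | 0 => idMat n
  | s + 1 => maxMul S (matPow S s)

lemma matPow_nonneg {S : Fin n → Fin n → ℝ} (hS : ∀ i j, 0 ≤ S i j) :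
    ∀ s i j, 0 ≤ matPow S s i j := by
  intro s
  induction s with
  | zero => exact idMat_nonneg
  | succ s ih => exact maxMul_nonneg hS ih

-- ===== prodSet lemmas =====

lemma prodSet_nonneg {Ψ : Set (Fin n → Fin n → ℝ)} (hΨ : ∀ A ∈ Ψ, ∀ i j, 0 ≤ A i j) :
    ∀ s, ∀ B ∈ prodSet Ψ s, ∀ i j, 0 ≤ B i j := by
  intro s
  induction s with
  | zero =>
      intro B hB
      have : B = idMat n := hB
      rw [this]; exact idMat_nonneg
  | succ s ih =>
      rintro B ⟨A, hA, B', hB', rfl⟩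
      exact maxMul_nonneg (hΨ A hA) (ih B' hB')

lemma prodSet_entry_le {Ψ : Set (Fin n → Fin n → ℝ)} (hΨ : ∀ A ∈ Ψ, ∀ i j, 0 ≤ A i j)
    {r : ℝ} (hr1 : 1 ≤ r) (hr : ∀ A ∈ Ψ, ∀ i j, A i j ≤ r) :
    ∀ s, ∀ B ∈ prodSet Ψ s, ∀ i j, B i j ≤ r ^ s := by
  intro s
  induction s with
  | zero =>
      intro B hB i j
      have : B = idMat n := hB
      rw [this]
      unfold idMat; split_ifs <;> simp
  | succ s ih =>
      rintro B ⟨A, hA, B', hB', rfl⟩ i j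
      have : Nonempty (Fin n) := ⟨i⟩
      show ⨆ k, A i k * B' k j ≤ r ^ (s + 1)
      refine fin_iSup_le _ fun k => ?_
      calc A i k * B' k j ≤ r * r ^ s :=
            mul_le_mul (hr A hA i k) (ih B' hB' k j) (prodSet_nonneg hΨ s B' hB' k j)
              (le_trans zero_le_one hr1)
        _ = r ^ (s + 1) := (pow_succ' r s).symm

lemma prodSet_le_matPow {Ψ : Set (Fin n → Fin n → ℝ)} (hΨ : ∀ A ∈ Ψ, ∀ i j, 0 ≤ A i j)
    {S : Fin n → Fin n → ℝ} (hS : ∀ A ∈ Ψ, ∀ i j, A i j ≤ S i j) :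
    ∀ s, ∀ B ∈ prodSet Ψ s, ∀ i j, B i j ≤ matPow S s i j := by
  intro s
  induction s with
  | zero =>
      intro B hB i j
      have : B = idMat n := hB
      rw [this]
      exact le_of_eq (by simp [matPow])
  | succ s ih =>
      rintro B ⟨A, hA, B', hB', rfl⟩ i j
      exact maxMul_mono (hΨ A hA) (prodSet_nonneg hΨ s B' hB') (hS A hA) (ih B' hB') i j

-- ===== Ssup lemmas =====

lemma bound_of_isBounded {Ψ : Set (Fin n → Fin n → ℝ)} (hb : Bornology.IsBounded Ψ) :
    ∃ r : ℝ, 1 ≤ r ∧ ∀ A ∈ Ψ, ∀ i j, |A i j| ≤ r := by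
  obtain ⟨r0, hr0⟩ := hb.subset_closedBall 0
  refine ⟨max r0 1, le_max_right _ _, fun A hA i j => ?_⟩
  have h1 : dist A 0 ≤ r0 := Metric.mem_closedBall.mp (hr0 hA)
  have h2 : ‖A‖ ≤ r0 := by rwa [dist_zero_right] at h1
  calc |A i j| = ‖A i j‖ := rfl
    _ ≤ ‖A i‖ := norm_le_pi_norm (A i) j
    _ ≤ ‖A‖ := norm_le_pi_norm A i
    _ ≤ max r0 1 := le_trans h2 (le_max_left _ _)

lemma le_Ssup {Ψ : Set (Fin n → Fin n → ℝ)} {r : ℝ} (hr : ∀ A ∈ Ψ, ∀ i j, |A i j| ≤ r)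
    {A : Fin n → Fin n → ℝ} (hA : A ∈ Ψ) (i j : Fin n) : A i j ≤ Ssup Ψ i j := by
  refine le_csSup ⟨r, ?_⟩ ⟨A, hA, rfl⟩
  rintro x ⟨B, hB, rfl⟩
  exact (abs_le.mp (hr B hB i j)).2

lemma Ssup_le {Ψ : Set (Fin n → Fin n → ℝ)} (hne : Ψ.Nonempty) {c : ℝ} (i j : Fin n)
    (h : ∀ A ∈ Ψ, A i j ≤ c) : Ssup Ψ i j ≤ c := by
  refine csSup_le (hne.image _) ?_
  rintro x ⟨B, hB, rfl⟩
  exact h B hB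

lemma lt_Ssup_exists {Ψ : Set (Fin n → Fin n → ℝ)} (hne : Ψ.Nonempty) {c : ℝ} (i j : Fin n)
    (hc : c < Ssup Ψ i j) : ∃ A ∈ Ψ, c < A i j := by
  obtain ⟨x, ⟨B, hB, rfl⟩, hx⟩ := exists_lt_of_lt_csSup (hne.image _) hc
  exact ⟨B, hB, hx⟩

-- ===== range product helpers =====

lemma prod_range_blocks (g : ℕ → ℝ) (m : ℕ) :
    ∀ ℓ, ∏ t ∈ Finset.range (m * ℓ), g t
      = ∏ j ∈ Finset.range ℓ, ∏ u ∈ Finset.range m, g (m * j + u) := by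
  intro ℓ
  induction ℓ with
  | zero => simp
  | succ ℓ ih => rw [Nat.mul_succ, Finset.prod_range_add, ih, Finset.prod_range_succ]

-- ===== mu lemmas =====

lemma inj_nonempty (k : Fin n) :
    Nonempty {f : Fin (k.1 + 1) → Fin n // Function.Injective f} := by
  refine ⟨⟨fun j => ⟨j.1, lt_of_le_of_lt (Nat.lt_succ_iff.mp j.2) k.2⟩, ?_⟩⟩
  intro a b hab
  have h2 := congrArg Fin.val hab
  simp only [] at h2
  exact Fin.ext h2

lemma mu_term_le {A : Fin n → Fin n → ℝ} (k : Fin n)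
    (c : {f : Fin (k.1 + 1) → Fin n // Function.Injective f}) :
    (∏ j : Fin (k.1 + 1), A (c.1 j) (c.1 (j + 1))) ^ ((1 : ℝ) / ((k.1 : ℝ) + 1)) ≤ mu A := by
  refine le_trans (le_fin_iSup (fun c : {f : Fin (k.1 + 1) → Fin n // Function.Injective f} =>
    (∏ j : Fin (k.1 + 1), A (c.1 j) (c.1 (j + 1))) ^ ((1 : ℝ) / ((k.1 : ℝ) + 1))) c) ?_
  exact le_fin_iSup (fun k : Fin n => ⨆ c : {f : Fin (k.1 + 1) → Fin n // Function.Injective f},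
    (∏ j : Fin (k.1 + 1), A (c.1 j) (c.1 (j + 1))) ^ ((1 : ℝ) / ((k.1 : ℝ) + 1))) k

lemma mu_le {A : Fin n → Fin n → ℝ} (hn : 0 < n) {x : ℝ}
    (h : ∀ (k : Fin n) (c : {f : Fin (k.1 + 1) → Fin n // Function.Injective f}),
      (∏ j : Fin (k.1 + 1), A (c.1 j) (c.1 (j + 1))) ^ ((1 : ℝ) / ((k.1 : ℝ) + 1)) ≤ x) :
    mu A ≤ x := by
  have : Nonempty (Fin n) := ⟨⟨0, hn⟩⟩
  refine fin_iSup_le _ fun k => ?_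
  have : Nonempty {f : Fin (k.1 + 1) → Fin n // Function.Injective f} := inj_nonempty k
  exact fin_iSup_le _ (h k)

lemma mu_nonneg (hn : 0 < n) {A : Fin n → Fin n → ℝ} (hA : ∀ i j, 0 ≤ A i j) :
    0 ≤ mu A := by
  obtain ⟨c⟩ := inj_nonempty (⟨0, hn⟩ : Fin n)
  refine le_trans ?_ (mu_term_le (⟨0, hn⟩ : Fin n) c)
  exact Real.rpow_nonneg (Finset.prod_nonneg fun j _ => hA _ _) _

lemma mu_attained (hn : 0 < n) (A : Fin n → Fin n → ℝ) :
    ∃ (k : Fin n) (c : {f : Fin (k.1 + 1) → Fin n // Function.Injective f}),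
      mu A = (∏ j : Fin (k.1 + 1), A (c.1 j) (c.1 (j + 1))) ^ ((1 : ℝ) / ((k.1 : ℝ) + 1)) := by
  have : Nonempty (Fin n) := ⟨⟨0, hn⟩⟩
  obtain ⟨k, hk⟩ := fin_iSup_attained
    (fun k : Fin n => ⨆ c : {f : Fin (k.1 + 1) → Fin n // Function.Injective f},
      (∏ j : Fin (k.1 + 1), A (c.1 j) (c.1 (j + 1))) ^ ((1 : ℝ) / ((k.1 : ℝ) + 1)))
  have : Nonempty {f : Fin (k.1 + 1) → Fin n // Function.Injective f} := inj_nonempty k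
  obtain ⟨c, hc⟩ := fin_iSup_attained
    (fun c : {f : Fin (k.1 + 1) → Fin n // Function.Injective f} =>
      (∏ j : Fin (k.1 + 1), A (c.1 j) (c.1 (j + 1))) ^ ((1 : ℝ) / ((k.1 : ℝ) + 1)))
  exact ⟨k, c, hk.trans hc⟩

lemma fin_add_one_val {M : ℕ} (j : Fin (M + 1)) :
    ((j + 1 : Fin (M + 1))).1 = (j.1 + 1) % (M + 1) := by
  rw [Fin.add_def, Fin.val_one']
  conv_rhs => rw [Nat.add_mod, Nat.mod_eq_of_lt j.2]

-- ===== closed walks are bounded by mu^L =====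

lemma walk_le_mu {S : Fin n → Fin n → ℝ} (hS : ∀ i j, 0 ≤ S i j) :
    ∀ L, 1 ≤ L → ∀ w : ℕ → Fin n, w L = w 0 →
      ∏ t ∈ Finset.range L, S (w t) (w (t + 1)) ≤ mu S ^ L := by
  intro L
  induction L using Nat.strong_induction_on with
  | _ L IH =>
    intro hL w hw
    have hn : 0 < n := (w 0).pos
    by_cases hinj : ∀ a, a < L → ∀ b, b < L → w a = w b → a = b
    · -- the walk is a simple cycle
      have hcard : L ≤ n := by
        have hinj' : Function.Injective (fun t : Fin L => w t.1) := by
          intro a b hab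
          exact Fin.ext (hinj a.1 a.2 b.1 b.2 hab)
        simpa using Fintype.card_le_of_injective _ hinj'
      have hkpos : L - 1 < n := by omega
      have hkL : (L - 1) + 1 = L := by omega
      have hc : Function.Injective (fun j : Fin ((L - 1) + 1) => w j.1) := by
        intro a b hab
        exact Fin.ext (hinj a.1 (by have := a.2; omega) b.1 (by have := b.2; omega) hab)
      have hterm := mu_term_le (A := S) ⟨L - 1, hkpos⟩ ⟨fun j => w j.1, hc⟩
      have hprod : (∏ j : Fin ((L - 1) + 1),
            S (w j.1) (w ((j + 1 : Fin ((L - 1) + 1)).1)))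
          = ∏ t ∈ Finset.range L, S (w t) (w (t + 1)) := by
        have h2 : ∀ j : Fin ((L - 1) + 1), S (w j.1) (w ((j + 1 : Fin ((L - 1) + 1)).1))
            = (fun t : ℕ => S (w t) (w ((t + 1) % ((L - 1) + 1)))) j.1 := by
          intro j; rw [fin_add_one_val]
        rw [Finset.prod_congr rfl (fun j _ => h2 j),
          Fin.prod_univ_eq_prod_range (fun t => S (w t) (w ((t + 1) % ((L - 1) + 1)))) ((L-1)+1),
          hkL]
        refine Finset.prod_congr rfl fun t ht => ?_
        rcases Nat.lt_or_ge (t + 1) L with h | h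
        · rw [Nat.mod_eq_of_lt h]
        · have h3 : t + 1 = L := by have := Finset.mem_range.mp ht; omega
          rw [h3, Nat.mod_self, ← hw]
      rw [hprod] at hterm
      have hexp : (((L - 1 : ℕ) : ℝ) + 1) = (L : ℝ) := by exact_mod_cast hkL
      rw [hexp] at hterm
      exact le_pow_of_rpow_le (Finset.prod_nonneg fun t _ => hS _ _) (by omega) hterm
    · -- there is a repeated vertex: split the walk
      push_neg at hinj
      obtain ⟨a0, ha0, b0, hb0, hwab0, hne0⟩ := hinj
      have key : ∀ a b, a < b → b < L → w a = w b →
          ∏ t ∈ Finset.range L, S (w t) (w (t + 1)) ≤ mu S ^ L := by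
        intro a b hab hbL hwab
        set g : ℕ → ℝ := fun t => S (w t) (w (t + 1)) with hg
        set L1 := b - a with hL1def
        set L2 := L - (b - a) with hL2def
        have hL1pos : 1 ≤ L1 := by omega
        have hL1lt : L1 < L := by omega
        have hL2pos : 1 ≤ L2 := by omega
        have hL2lt : L2 < L := by omega
        have h1 : ∏ t ∈ Finset.range L1, g (a + t) ≤ mu S ^ L1 := by
          have := IH L1 hL1lt hL1pos (fun t => w (a + t)) (by
            show w (a + L1) = w (a + 0)
            rw [show a + L1 = b by omega, Nat.add_zero]
            exact hwab.symm)
          exact this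
        set w2 : ℕ → Fin n := fun t => if t < a then w t else w (t + (b - a)) with hw2def
        have hsplit2 : ∏ t ∈ Finset.range L2, S (w2 t) (w2 (t + 1))
            = (∏ t ∈ Finset.range a, g t) * ∏ t ∈ Finset.range (L - b), g (b + t) := by
          calc ∏ t ∈ Finset.range L2, S (w2 t) (w2 (t + 1))
              = ∏ t ∈ Finset.range (a + (L - b)), S (w2 t) (w2 (t + 1)) := by
                rw [show a + (L - b) = L2 by omega]
            _ = (∏ t ∈ Finset.range a, S (w2 t) (w2 (t + 1)))
                * ∏ t ∈ Finset.range (L - b), S (w2 (a + t)) (w2 (a + t + 1)) :=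
                Finset.prod_range_add _ a (L - b)
            _ = (∏ t ∈ Finset.range a, g t) * ∏ t ∈ Finset.range (L - b), g (b + t) := by
                congr 1
                · refine Finset.prod_congr rfl fun t ht => ?_
                  have ht' : t < a := Finset.mem_range.mp ht
                  have e1 : w2 t = w t := by simp only [hw2def]; rw [if_pos ht']
                  have e2 : w2 (t + 1) = w (t + 1) := by
                    simp only [hw2def]
                    by_cases h3 : t + 1 < a
                    · rw [if_pos h3]
                    · have h4 : t + 1 = a := by omega
                      rw [if_neg h3, h4, show a + (b - a) = b by omega, ← hwab]
                  rw [e1, e2]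
                · refine Finset.prod_congr rfl fun t ht => ?_
                  have e1 : w2 (a + t) = w (b + t) := by
                    simp only [hw2def]
                    rw [if_neg (by omega), show a + t + (b - a) = b + t by omega]
                  have e2 : w2 (a + t + 1) = w (b + t + 1) := by
                    simp only [hw2def]
                    rw [if_neg (by omega), show a + t + 1 + (b - a) = b + t + 1 by omega]
                  rw [e1, e2]
        have h2 : (∏ t ∈ Finset.range a, g t) * ∏ t ∈ Finset.range (L - b), g (b + t)
            ≤ mu S ^ L2 := by
          rw [← hsplit2]
          refine IH L2 hL2lt hL2pos w2 ?_
          have e1 : w2 L2 = w 0 := by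
            simp only [hw2def]
            rw [if_neg (by omega), show L2 + (b - a) = L by omega, hw]
          have e2 : w2 0 = w 0 := by
            simp only [hw2def]
            by_cases h0 : 0 < a
            · rw [if_pos h0]
            · rw [if_neg h0, Nat.zero_add, show b - a = b by omega, ← hwab,
                show a = 0 by omega]
          rw [e1, e2]
        have hsplit : ∏ t ∈ Finset.range L, g t
            = ((∏ t ∈ Finset.range a, g t) * ∏ t ∈ Finset.range L1, g (a + t))
              * ∏ t ∈ Finset.range (L - b), g (b + t) := by
          calc ∏ t ∈ Finset.range L, g t
              = ∏ t ∈ Finset.range (b + (L - b)), g t := by rw [show b + (L - b) = L by omega]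
            _ = (∏ t ∈ Finset.range b, g t) * ∏ t ∈ Finset.range (L - b), g (b + t) :=
                Finset.prod_range_add g b (L - b)
            _ = ((∏ t ∈ Finset.range a, g t) * ∏ t ∈ Finset.range L1, g (a + t))
                * ∏ t ∈ Finset.range (L - b), g (b + t) := by
                congr 1
                rw [← Finset.prod_range_add g a L1, show a + L1 = b by omega]
        have hgnn : ∀ (s : Finset ℕ) (f : ℕ → ℕ), 0 ≤ ∏ t ∈ s, g (f t) :=
          fun s f => Finset.prod_nonneg fun t _ => hS _ _
        calc ∏ t ∈ Finset.range L, g t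
            = (∏ t ∈ Finset.range L1, g (a + t))
              * ((∏ t ∈ Finset.range a, g t) * ∏ t ∈ Finset.range (L - b), g (b + t)) := by
              rw [hsplit]; ring
          _ ≤ mu S ^ L1 * mu S ^ L2 := by
              refine mul_le_mul h1 h2 ?_ (pow_nonneg (mu_nonneg hn hS) L1)
              exact mul_nonneg (Finset.prod_nonneg fun t _ => hS _ _)
                (Finset.prod_nonneg fun t _ => hS _ _)
          _ = mu S ^ L := by rw [← pow_add, show L1 + L2 = L by omega]
      rcases (Ne.lt_or_gt hne0) with h | h
      · exact key a0 b0 h hb0 hwab0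
      · exact key b0 a0 h ha0 hwab0.symm

-- ===== existence of near-optimal paths for matPow =====

lemma matPow_path {S : Fin n → Fin n → ℝ} (hS : ∀ i j, 0 ≤ S i j) :
    ∀ s (i j : Fin n), ∃ w : ℕ → Fin n, w 0 = i ∧ w (s + 1) = j ∧
      matPow S (s + 1) i j ≤ ∏ t ∈ Finset.range (s + 1), S (w t) (w (t + 1)) := by
  intro s
  induction s with
  | zero =>
      intro i j
      refine ⟨fun t => if t = 0 then i else j, by simp, by simp, ?_⟩
      have h1 : matPow S 1 i j = S i j := by
        show maxMul S (idMat n) i j = S i j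
        rw [maxMul_idMat_right hS]
      rw [h1]
      simp
  | succ s ih =>
      intro i j
      have : Nonempty (Fin n) := ⟨i⟩
      obtain ⟨k0, hk0⟩ := fin_iSup_attained (fun k => S i k * matPow S (s + 1) k j)
      obtain ⟨w', hw0, hws, hwle⟩ := ih k0 j
      refine ⟨fun t => if t = 0 then i else w' (t - 1), by simp, by simp [hws], ?_⟩
      have hformula : matPow S (s + 2) i j = S i k0 * matPow S (s + 1) k0 j := by
        show (⨆ k, S i k * matPow S (s + 1) k j) = _
        exact hk0
      have hprod : ∏ t ∈ Finset.range (s + 2),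
            S ((fun t => if t = 0 then i else w' (t - 1)) t)
              ((fun t => if t = 0 then i else w' (t - 1)) (t + 1))
          = (∏ t ∈ Finset.range (s + 1), S (w' t) (w' (t + 1))) * S i (w' 0) := by
        rw [Finset.prod_range_succ' (fun t =>
          S ((fun t => if t = 0 then i else w' (t - 1)) t)
            ((fun t => if t = 0 then i else w' (t - 1)) (t + 1))) (s + 1)]
        simp
      rw [hformula, hprod, hw0]
      exact le_trans (mul_le_mul_of_nonneg_left hwle (hS i k0))
        (le_of_eq (mul_comm _ _))

-- ===== eta lemmas =====

lemma eVec_nonneg (i : Fin n) : ∀ j, 0 ≤ eVec i j := by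
  intro j
  unfold eVec
  rcases eq_or_ne i j with rfl | h
  · simp
  · simp [Pi.single_apply, h]

lemma eta_ratio_le (N : NormOn n) {Q : Fin n → Fin n → ℝ} {K : ℝ}
    (hQnn : ∀ i j, 0 ≤ Q i j) (hQK : ∀ i j, Q i j ≤ K)
    {C : ℝ} (hC : ∀ (u : Fin n → ℝ) i, |u i| ≤ C * N.f u)
    {x : Fin n → ℝ} (hx : ∀ i, 0 ≤ x i) :
    N.f (maxVec Q x) ≤ K * C * (∑ i, N.f (eVec i)) * N.f x := by
  have hcoord : ∀ i, |maxVec Q x i| ≤ K * (C * N.f x) := by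
    intro i
    have : Nonempty (Fin n) := ⟨i⟩
    rw [abs_of_nonneg (maxVec_nonneg hQnn hx i)]
    refine fin_iSup_le _ fun j => ?_
    have h1 : x j ≤ C * N.f x := le_trans (le_abs_self _) (hC x j)
    have hK : 0 ≤ K := le_trans (hQnn i i) (hQK i i)
    have hCN : 0 ≤ C * N.f x := le_trans (abs_nonneg _) (hC x j)
    exact mul_le_mul (hQK i j) h1 (hx j) hK
  calc N.f (maxVec Q x) ≤ ∑ i, |maxVec Q x i| * N.f (eVec i) := N.le_sum_coords _
    _ ≤ ∑ i, (K * (C * N.f x)) * N.f (eVec i) :=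
        Finset.sum_le_sum fun i _ => mul_le_mul_of_nonneg_right (hcoord i) (N.nonneg _)
    _ = K * C * (∑ i, N.f (eVec i)) * N.f x := by rw [← Finset.mul_sum]; ring

lemma eta_bddAbove (N : NormOn n) {Q : Fin n → Fin n → ℝ} {K : ℝ}
    (hQnn : ∀ i j, 0 ≤ Q i j) (hQK : ∀ i j, Q i j ≤ K)
    {C : ℝ} (hC : ∀ (u : Fin n → ℝ) i, |u i| ≤ C * N.f u) :
    BddAbove (Set.range (fun x : {x : Fin n → ℝ // (∀ i, 0 ≤ x i) ∧ x ≠ 0} =>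
      N.f (maxVec Q x.1) / N.f x.1)) := by
  refine ⟨K * C * (∑ i, N.f (eVec i)), ?_⟩
  rintro y ⟨x, rfl⟩
  rw [div_le_iff₀ (N.pos x.2.2)]
  exact eta_ratio_le N hQnn hQK hC x.2.1

lemma eta_nonneg (N : NormOn n) (hn : 0 < n) {Q : Fin n → Fin n → ℝ} {K : ℝ}
    (hQnn : ∀ i j, 0 ≤ Q i j) (hQK : ∀ i j, Q i j ≤ K)
    {C : ℝ} (hC : ∀ (u : Fin n → ℝ) i, |u i| ≤ C * N.f u) :
    0 ≤ eta N Q := by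
  have x0 : {x : Fin n → ℝ // (∀ i, 0 ≤ x i) ∧ x ≠ 0} :=
    ⟨eVec ⟨0, hn⟩, eVec_nonneg _, eVec_ne_zero _⟩
  refine le_trans (div_nonneg (N.nonneg _) (N.nonneg _))
    (le_ciSup (eta_bddAbove N hQnn hQK hC) x0)

lemma eta_le_bound (N : NormOn n) (hn : 0 < n) {Q : Fin n → Fin n → ℝ} {K : ℝ}
    (hQnn : ∀ i j, 0 ≤ Q i j) (hQK : ∀ i j, Q i j ≤ K)
    {C : ℝ} (hC : ∀ (u : Fin n → ℝ) i, |u i| ≤ C * N.f u) :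
    eta N Q ≤ K * C * (∑ i, N.f (eVec i)) := by
  have : Nonempty {x : Fin n → ℝ // (∀ i, 0 ≤ x i) ∧ x ≠ 0} :=
    ⟨⟨eVec ⟨0, hn⟩, eVec_nonneg _, eVec_ne_zero _⟩⟩
  refine ciSup_le fun x => ?_
  rw [div_le_iff₀ (N.pos x.2.2)]
  exact eta_ratio_le N hQnn hQK hC x.2.1

lemma maxVec_le_eta (N : NormOn n) {Q : Fin n → Fin n → ℝ} {K : ℝ}
    (hQnn : ∀ i j, 0 ≤ Q i j) (hQK : ∀ i j, Q i j ≤ K)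
    {C : ℝ} (hC : ∀ (u : Fin n → ℝ) i, |u i| ≤ C * N.f u)
    {x : Fin n → ℝ} (hx : ∀ i, 0 ≤ x i) :
    N.f (maxVec Q x) ≤ eta N Q * N.f x := by
  by_cases hx0 : x = 0
  · subst hx0
    have h1 : maxVec Q 0 = 0 := funext fun i => maxVec_zero i
    simp [h1, N.zero]
  · have h1 := le_ciSup (eta_bddAbove N hQnn hQK hC) ⟨x, hx, hx0⟩
    rw [div_le_iff₀ (N.pos hx0)] at h1
    exact h1

-- ===== limit helpers =====

lemma le_of_pow_le_pow_mul {a b Cst : ℝ} (ha : 0 ≤ a) (hb : 0 ≤ b) (hCpos : 0 < Cst)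
    (h : ∀ r : ℕ, 1 ≤ r → a ^ r ≤ Cst * b ^ r) : a ≤ b := by
  by_contra hab
  push_neg at hab
  rcases eq_or_lt_of_le hb with hb0 | hbpos
  · have h1 := h 1 le_rfl
    rw [pow_one, pow_one, ← hb0, mul_zero] at h1
    have : a = 0 := le_antisymm h1 ha
    rw [this] at hab
    exact absurd (lt_of_le_of_lt hb hab) (lt_irrefl 0)
  · have hba : 1 < a / b := (one_lt_div hbpos).mpr hab
    obtain ⟨r, hr⟩ := pow_unbounded_of_one_lt Cst hba
    have h2 := h (r + 1) (by omega)
    have h3 : (a / b) ^ (r + 1) ≤ Cst := by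
      rw [div_pow, div_le_iff₀ (by positivity)]
      exact h2
    have h4 : Cst < (a / b) ^ (r + 1) :=
      lt_of_lt_of_le hr (pow_le_pow_right₀ (le_of_lt hba) (Nat.le_succ r))
    exact absurd h3 (not_le.mpr h4)

lemma le_of_forall_theta {a b : ℝ} (K : ℕ) (hK : K ≠ 0) (ha : 0 ≤ a) (hb : 0 ≤ b)
    (h : ∀ θ : ℝ, 0 < θ → θ < 1 → θ ^ K * a ≤ b) : a ≤ b := by
  by_contra hab
  push_neg at hab
  have hapos : 0 < a := lt_of_le_of_lt hb hab
  set z := max (b / a) 0 with hz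
  have hz0 : 0 ≤ z := le_max_right _ _
  have hz1 : z < 1 := by
    have h1 : b / a < 1 := (div_lt_one hapos).mpr hab
    exact max_lt h1 one_pos
  set θ := ((z + 1) / 2) ^ ((1 : ℝ) / (K : ℝ)) with hθ
  have hmid : 0 < (z + 1) / 2 := by linarith
  have hθpos : 0 < θ := Real.rpow_pos_of_pos hmid _
  have hθlt : θ < 1 := Real.rpow_lt_one (le_of_lt hmid) (by linarith)
    (by positivity)
  have hθK : θ ^ K = (z + 1) / 2 := rpow_inv_nat_pow (le_of_lt hmid) hK
  have h2 := h θ hθpos hθlt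
  rw [hθK] at h2
  have h3 : b / a < (z + 1) / 2 := by
    have h5 : b / a ≤ z := le_max_left _ _
    linarith
  have h4 : b < (z + 1) / 2 * a := (div_lt_iff₀ hapos).mp h3
  exact absurd h2 (not_le.mpr h4)

-- ===== norm bound along chains =====

lemma chain_norm_le (N : NormOn n) {Ψ : Set (Fin n → Fin n → ℝ)}
    (hΨ : ∀ A ∈ Ψ, ∀ i j, 0 ≤ A i j)
    {r : ℝ} (hr1 : 1 ≤ r) (hre : ∀ A ∈ Ψ, ∀ i j, A i j ≤ r)
    {C : ℝ} (hC : ∀ (u : Fin n → ℝ) i, |u i| ≤ C * N.f u)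
    {F : ℕ → (Fin n → Fin n → ℝ)} (hF : ∀ t, F t ∈ Ψ) (m : ℕ)
    {q : ℝ} (hq : ∀ B ∈ prodSet Ψ m, eta N B ≤ q) (hq0 : 0 ≤ q)
    {x : Fin n → ℝ} (hx : ∀ i, 0 ≤ x i) :
    ∀ s a, N.f (maxVec (chain F a (m * s)) x) ≤ q ^ s * N.f x := by
  have hFnn : ∀ t i j, 0 ≤ F t i j := fun t => hΨ _ (hF t)
  intro s
  induction s with
  | zero =>
      intro a
      show N.f (maxVec (chain F a 0) x) ≤ q ^ 0 * N.f x
      have h1 : chain F a 0 = idMat n := rfl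
      rw [h1, maxVec_idMat hx, pow_zero, one_mul]
  | succ s ih =>
      intro a
      have hsplit : chain F a (m * (s + 1)) = maxMul (chain F a m) (chain F (a + m) (m * s)) := by
        rw [show m * (s + 1) = m + m * s by ring]
        exact chain_split F hFnn m (m * s) a
      rw [hsplit, maxVec_assoc (chain_nonneg F hFnn m a) hx]
      set y := maxVec (chain F (a + m) (m * s)) x with hy
      have hynn : ∀ i, 0 ≤ y i := maxVec_nonneg (chain_nonneg F hFnn (m * s) (a + m)) hx
      have hQmem : chain F a m ∈ prodSet Ψ m := chain_mem hF m a
      have hQnn := prodSet_nonneg hΨ m _ hQmem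
      have hQK := prodSet_entry_le hΨ hr1 hre m _ hQmem
      calc N.f (maxVec (chain F a m) y) ≤ eta N (chain F a m) * N.f y :=
            maxVec_le_eta N hQnn hQK hC hynn
        _ ≤ q * N.f y := mul_le_mul_of_nonneg_right (hq _ hQmem) (N.nonneg y)
        _ ≤ q * (q ^ s * N.f x) := mul_le_mul_of_nonneg_left (ih (a + m)) hq0
        _ = q ^ (s + 1) * N.f x := by ring

-- ===== lower bound: mu of a product is at most mu(S)^m =====

lemma mu_prod_le (hn : 0 < n) {Ψ : Set (Fin n → Fin n → ℝ)}
    (hΨ : ∀ A ∈ Ψ, ∀ i j, 0 ≤ A i j)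
    {r : ℝ} (hrb : ∀ A ∈ Ψ, ∀ i j, |A i j| ≤ r)
    {m : ℕ} (hm : 1 ≤ m) {B : Fin n → Fin n → ℝ} (hB : B ∈ prodSet Ψ m) :
    mu B ≤ mu (Ssup Ψ) ^ m := by
  obtain ⟨m', rfl⟩ : ∃ m', m = m' + 1 := ⟨m - 1, by omega⟩
  set S := Ssup Ψ with hSdef
  have hne : Ψ.Nonempty := by
    obtain ⟨A, hA, -⟩ := hB
    exact ⟨A, hA⟩
  have hSnn : ∀ i j, 0 ≤ S i j := by
    intro i j
    obtain ⟨A0, hA0⟩ := hne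
    exact le_trans (hΨ A0 hA0 i j) (le_Ssup hrb hA0 i j)
  have hSle : ∀ A ∈ Ψ, ∀ i j, A i j ≤ S i j := fun A hA i j => le_Ssup hrb hA i j
  have hBnn := prodSet_nonneg hΨ (m' + 1) B hB
  have hBle := prodSet_le_matPow hΨ hSle (m' + 1) B hB
  refine mu_le hn fun k c => ?_
  have hℓpos : 0 < k.1 + 1 := Nat.succ_pos _
  have hmpos : 0 < m' + 1 := Nat.succ_pos _
  choose wj hw0 hwm hwle using fun j : Fin (k.1 + 1) => matPow_path hSnn m' (c.1 j) (c.1 (j + 1))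
  set W : ℕ → Fin n := fun t => wj ⟨(t / (m' + 1)) % (k.1 + 1), Nat.mod_lt _ hℓpos⟩ (t % (m' + 1))
    with hW
  have hWblock : ∀ (j u : ℕ), ∀ (hj : j < (k.1 + 1)), u < m' + 1 →
      W ((m' + 1) * j + u) = wj ⟨j, hj⟩ u := by
    intro j u hj hu
    have e1 : ((m' + 1) * j + u) / (m' + 1) % (k.1 + 1) = j := by
      rw [Nat.mul_add_div hmpos, Nat.div_eq_of_lt hu, Nat.add_zero, Nat.mod_eq_of_lt hj]
    have e2 : ((m' + 1) * j + u) % (m' + 1) = u := by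
      rw [Nat.mul_add_mod, Nat.mod_eq_of_lt hu]
    simp only [hW, e1, e2]
  have step1 : ∏ j : Fin (k.1 + 1), B (c.1 j) (c.1 (j + 1))
      ≤ ∏ j : Fin (k.1 + 1), matPow S (m' + 1) (c.1 j) (c.1 (j + 1)) :=
    Finset.prod_le_prod (fun j _ => hBnn _ _) (fun j _ => hBle _ _)
  have step2 : ∏ j : Fin (k.1 + 1), matPow S (m' + 1) (c.1 j) (c.1 (j + 1))
      ≤ ∏ j : Fin (k.1 + 1), ∏ u ∈ Finset.range (m' + 1), S (wj j u) (wj j (u + 1)) :=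
    Finset.prod_le_prod (fun j _ => matPow_nonneg hSnn _ _ _) (fun j _ => hwle j)
  have step3 : ∏ j : Fin (k.1 + 1), ∏ u ∈ Finset.range (m' + 1), S (wj j u) (wj j (u + 1))
      = ∏ t ∈ Finset.range ((m' + 1) * (k.1 + 1)), S (W t) (W (t + 1)) := by
    rw [prod_range_blocks (fun t => S (W t) (W (t + 1))) (m' + 1) (k.1 + 1)]
    rw [← Fin.prod_univ_eq_prod_range (fun j =>
      ∏ u ∈ Finset.range (m' + 1),
        S (W ((m' + 1) * j + u)) (W ((m' + 1) * j + u + 1))) (k.1 + 1)]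
    refine Finset.prod_congr rfl fun j _ => ?_
    refine Finset.prod_congr rfl fun u hu => ?_
    have hu' : u < m' + 1 := Finset.mem_range.mp hu
    have e1 : W ((m' + 1) * (j : ℕ) + u) = wj j u := by
      rw [hWblock (j : ℕ) u j.2 hu']
    have e2 : W ((m' + 1) * (j : ℕ) + u + 1) = wj j (u + 1) := by
      rcases Nat.lt_or_ge (u + 1) (m' + 1) with h | h
      · have e3 : (m' + 1) * (j : ℕ) + u + 1 = (m' + 1) * (j : ℕ) + (u + 1) := rfl
        rw [e3, hWblock (j : ℕ) (u + 1) j.2 h]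
      · have hu1 : u + 1 = m' + 1 := by omega
        have e3 : (m' + 1) * (j : ℕ) + u + 1 = (m' + 1) * ((j : ℕ) + 1) := by
          conv_rhs => rw [Nat.mul_succ]
          omega
        rw [e3]
        have e4 : ((m' + 1) * ((j : ℕ) + 1)) / (m' + 1) % (k.1 + 1) = ((j : ℕ) + 1) % (k.1 + 1) := by
          rw [Nat.mul_div_cancel_left _ hmpos]
        have e5 : ((m' + 1) * ((j : ℕ) + 1)) % (m' + 1) = 0 := Nat.mul_mod_right _ _
        simp only [hW, e4, e5]
        rw [hw0, hu1, hwm]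
        exact congrArg c.1 (Fin.ext (by rw [fin_add_one_val]))
    rw [e1, e2]
  have hclosed : W ((m' + 1) * (k.1 + 1)) = W 0 := by
    have e1 : ((m' + 1) * (k.1 + 1)) / (m' + 1) % (k.1 + 1) = 0 := by
      rw [Nat.mul_div_cancel_left _ hmpos, Nat.mod_self]
    have e2 : ((m' + 1) * (k.1 + 1)) % (m' + 1) = 0 := Nat.mul_mod_right _ _
    have e3 : (0 : ℕ) / (m' + 1) % (k.1 + 1) = 0 := by simp
    have e4 : (0 : ℕ) % (m' + 1) = 0 := by simp
    simp only [hW, e1, e2, e3, e4]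
  have step4 : ∏ t ∈ Finset.range ((m' + 1) * (k.1 + 1)), S (W t) (W (t + 1))
      ≤ mu S ^ ((m' + 1) * (k.1 + 1)) :=
    walk_le_mu hSnn ((m' + 1) * (k.1 + 1)) (Nat.one_le_iff_ne_zero.mpr (Nat.mul_ne_zero (by omega) (by omega))) W hclosed
  have hfinal : ∏ j : Fin (k.1 + 1), B (c.1 j) (c.1 (j + 1)) ≤ (mu S ^ (m' + 1)) ^ (k.1 + 1) := by
    rw [← pow_mul]
    exact le_trans step1 (le_trans step2 (le_of_eq step3 |>.trans step4))
  have hexp : ((k.1 : ℝ) + 1) = (((k.1 + 1) : ℕ) : ℝ) := by push_cast; ring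
  rw [hexp]
  exact rpow_le_of_le_pow (Finset.prod_nonneg fun j _ => hBnn _ _)
    (pow_nonneg (mu_nonneg hn hSnn) _) (by omega) hfinal

-- ===== upper bound: mu(S)^m ≤ q =====

lemma mu_pow_le_q (N : NormOn n) (hn : 0 < n) {Ψ : Set (Fin n → Fin n → ℝ)}
    (hne : Ψ.Nonempty) (hΨ : ∀ A ∈ Ψ, ∀ i j, 0 ≤ A i j)
    {r : ℝ} (hr1 : 1 ≤ r) (hrb : ∀ A ∈ Ψ, ∀ i j, |A i j| ≤ r)
    {C : ℝ} (hCpos : 0 < C) (hC : ∀ (u : Fin n → ℝ) i, |u i| ≤ C * N.f u)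
    {m : ℕ} (hm : 1 ≤ m) {q : ℝ}
    (hq : ∀ B ∈ prodSet Ψ m, eta N B ≤ q) (hq0 : 0 ≤ q) :
    mu (Ssup Ψ) ^ m ≤ q := by
  set S := Ssup Ψ with hSdef
  have hSnn : ∀ i j, 0 ≤ S i j := by
    intro i j; obtain ⟨A0, hA0⟩ := hne
    exact le_trans (hΨ A0 hA0 i j) (le_Ssup hrb hA0 i j)
  have hre : ∀ A ∈ Ψ, ∀ i j, A i j ≤ r := fun A hA i j => (abs_le.mp (hrb A hA i j)).2
  by_cases hμpos : 0 < mu S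
  case neg =>
    have h0 : mu S = 0 := le_antisymm (not_lt.mp hμpos) (mu_nonneg hn hSnn)
    rw [h0, zero_pow (by omega)]
    exact hq0
  case pos =>
  refine le_of_forall_theta m (by omega) (pow_nonneg (le_of_lt hμpos) m) hq0 ?_
  intro θ hθ0 hθ1
  rw [← mul_pow]
  obtain ⟨k, c, hμeq⟩ := mu_attained hn S
  have hℓpos : 0 < k.1 + 1 := Nat.succ_pos _
  have hexp : ((k.1 : ℝ) + 1) = (((k.1 + 1) : ℕ) : ℝ) := by push_cast; ring
  have hprodnn : 0 ≤ ∏ j : Fin (k.1 + 1), S (c.1 j) (c.1 (j + 1)) :=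
    Finset.prod_nonneg fun j _ => hSnn _ _
  have hprodμ : ∏ j : Fin (k.1 + 1), S (c.1 j) (c.1 (j + 1)) = mu S ^ (k.1 + 1) := by
    rw [hμeq, hexp]
    exact (rpow_inv_nat_pow hprodnn (by omega)).symm
  have harcpos : ∀ j : Fin (k.1 + 1), 0 < S (c.1 j) (c.1 (j + 1)) := by
    intro j
    have hne0 : ∏ j : Fin (k.1 + 1), S (c.1 j) (c.1 (j + 1)) ≠ 0 := by
      rw [hprodμ]; exact (pow_pos hμpos _).ne'
    have h2 := Finset.prod_ne_zero_iff.mp hne0 j (Finset.mem_univ j)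
    exact lt_of_le_of_ne (hSnn _ _) (Ne.symm h2)
  have hchoice : ∀ j : Fin (k.1 + 1), ∃ A ∈ Ψ,
      θ * S (c.1 j) (c.1 (j + 1)) < A (c.1 j) (c.1 (j + 1)) := by
    intro j
    refine lt_Ssup_exists hne _ _ ?_
    calc θ * S (c.1 j) (c.1 (j + 1)) < 1 * S (c.1 j) (c.1 (j + 1)) :=
          mul_lt_mul_of_pos_right hθ1 (harcpos j)
      _ = S (c.1 j) (c.1 (j + 1)) := one_mul _
  choose Aj hAjmem hAjgt using hchoice
  set F : ℕ → (Fin n → Fin n → ℝ) := fun t => Aj ⟨t % (k.1 + 1), Nat.mod_lt _ hℓpos⟩ with hF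
  have hFmem : ∀ t, F t ∈ Ψ := fun t => hAjmem _
  have hFnn : ∀ t i j, 0 ≤ F t i j := fun t => hΨ _ (hFmem t)
  set cw : ℕ → Fin n := fun t => c.1 ⟨t % (k.1 + 1), Nat.mod_lt _ hℓpos⟩ with hcw
  have hcw_succ : ∀ t, cw (t + 1) = c.1 (⟨t % (k.1 + 1), Nat.mod_lt _ hℓpos⟩ + 1) := by
    intro t
    simp only [hcw]
    refine congrArg c.1 (Fin.ext ?_)
    rw [fin_add_one_val]
    exact ((Nat.mod_modEq t (k.1 + 1)).add_right 1).symm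
  have hCe : 0 < C * N.f (eVec (cw 0)) := mul_pos hCpos (N.pos (eVec_ne_zero _))
  have main : ∀ R : ℕ, 1 ≤ R →
      (((θ * mu S) ^ m) ^ (k.1 + 1)) ^ R
        ≤ (C * N.f (eVec (cw 0))) * (q ^ (k.1 + 1)) ^ R := by
    intro R hR
    set L := m * ((k.1 + 1) * R) with hLdef
    set P := chain F 0 L with hP
    have hPnn : ∀ i j, 0 ≤ P i j := chain_nonneg F hFnn L 0
    have hwalk : ∏ t ∈ Finset.range L, F t (cw t) (cw (t + 1)) ≤ P (cw 0) (cw L) := by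
      have h := chain_entry_ge F hFnn cw L 0
      simpa using h
    have harc : ∀ t, θ * S (cw t) (cw (t + 1)) ≤ F t (cw t) (cw (t + 1)) := by
      intro t
      rw [hcw_succ t]
      simp only [hF, hcw]
      exact le_of_lt (hAjgt ⟨t % (k.1 + 1), Nat.mod_lt _ hℓpos⟩)
    have hθS : ∏ t ∈ Finset.range L, (θ * S (cw t) (cw (t + 1)))
        ≤ ∏ t ∈ Finset.range L, F t (cw t) (cw (t + 1)) :=
      Finset.prod_le_prod (fun t _ => mul_nonneg (le_of_lt hθ0) (hSnn _ _))
        (fun t _ => harc t)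
    have hθfact : ∏ t ∈ Finset.range L, (θ * S (cw t) (cw (t + 1)))
        = θ ^ L * ∏ t ∈ Finset.range L, S (cw t) (cw (t + 1)) := by
      rw [Finset.prod_mul_distrib, Finset.prod_const, Finset.card_range]
    have hperiod : ∏ t ∈ Finset.range L, S (cw t) (cw (t + 1)) = (mu S) ^ L := by
      have hL' : L = (k.1 + 1) * (m * R) := by rw [hLdef]; ring
      rw [hL', prod_range_blocks (fun t => S (cw t) (cw (t + 1))) (k.1 + 1) (m * R)]
      have hblock : ∀ jj ∈ Finset.range (m * R),
          ∏ u ∈ Finset.range (k.1 + 1),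
            S (cw ((k.1 + 1) * jj + u)) (cw ((k.1 + 1) * jj + u + 1))
          = mu S ^ (k.1 + 1) := by
        intro jj _
        have hcwp : ∀ u, cw ((k.1 + 1) * jj + u) = cw u := by
          intro u
          simp only [hcw]
          refine congrArg c.1 (Fin.ext ?_)
          show ((k.1 + 1) * jj + u) % (k.1 + 1) = u % (k.1 + 1)
          exact Nat.mul_add_mod _ _ _
        have hcwp1 : ∀ u, cw ((k.1 + 1) * jj + u + 1) = cw (u + 1) := fun u => hcwp (u + 1)
        calc ∏ u ∈ Finset.range (k.1 + 1),
              S (cw ((k.1 + 1) * jj + u)) (cw ((k.1 + 1) * jj + u + 1))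
            = ∏ u ∈ Finset.range (k.1 + 1), S (cw u) (cw (u + 1)) :=
              Finset.prod_congr rfl fun u _ => by rw [hcwp u, hcwp1 u]
          _ = ∏ j : Fin (k.1 + 1), S (c.1 j) (c.1 (j + 1)) := by
              rw [← Fin.prod_univ_eq_prod_range (fun t => S (cw t) (cw (t + 1))) (k.1 + 1)]
              refine Finset.prod_congr rfl fun j _ => ?_
              rw [hcw_succ j.1]
              have ej : (⟨j.1 % (k.1 + 1), Nat.mod_lt _ hℓpos⟩ : Fin (k.1 + 1)) = j :=
                Fin.ext (Nat.mod_eq_of_lt j.2)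
              simp only [hcw, ej]
          _ = mu S ^ (k.1 + 1) := hprodμ
      rw [Finset.prod_congr rfl hblock, Finset.prod_const, Finset.card_range, ← pow_mul]
    have hnorm : N.f (maxVec P (eVec (cw 0)))
        ≤ q ^ ((k.1 + 1) * R) * N.f (eVec (cw 0)) :=
      chain_norm_le N hΨ hr1 hre hC hFmem m hq hq0 (eVec_nonneg (cw 0)) ((k.1 + 1) * R) 0
    have hclosed : cw L = cw 0 := by
      simp only [hcw]
      refine congrArg c.1 (Fin.ext ?_)
      show L % (k.1 + 1) = 0 % (k.1 + 1)
      rw [show L = (k.1 + 1) * (m * R) from by rw [hLdef]; ring, Nat.mul_mod_right,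
        Nat.zero_mod]
    have hentry : P (cw 0) (cw 0) ≤ C * N.f (maxVec P (eVec (cw 0))) := by
      have h1 : maxVec P (eVec (cw 0)) (cw 0) = P (cw 0) (cw 0) := by
        rw [maxVec_single hPnn (cw 0)]
      calc P (cw 0) (cw 0) = maxVec P (eVec (cw 0)) (cw 0) := h1.symm
        _ ≤ |maxVec P (eVec (cw 0)) (cw 0)| := le_abs_self _
        _ ≤ C * N.f (maxVec P (eVec (cw 0))) := hC _ _
    calc (((θ * mu S) ^ m) ^ (k.1 + 1)) ^ R = (θ * mu S) ^ L := by
          rw [← pow_mul, ← pow_mul, hLdef]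
      _ = θ ^ L * mu S ^ L := mul_pow _ _ _
      _ = ∏ t ∈ Finset.range L, (θ * S (cw t) (cw (t + 1))) := by
          rw [hθfact, hperiod]
      _ ≤ ∏ t ∈ Finset.range L, F t (cw t) (cw (t + 1)) := hθS
      _ ≤ P (cw 0) (cw L) := hwalk
      _ = P (cw 0) (cw 0) := by rw [hclosed]
      _ ≤ C * N.f (maxVec P (eVec (cw 0))) := hentry
      _ ≤ C * (q ^ ((k.1 + 1) * R) * N.f (eVec (cw 0))) :=
          mul_le_mul_of_nonneg_left hnorm (le_of_lt hCpos)
      _ = (C * N.f (eVec (cw 0))) * (q ^ (k.1 + 1)) ^ R := by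
          rw [← pow_mul]
          ring
  have h5 : ((θ * mu S) ^ m) ^ (k.1 + 1) ≤ q ^ (k.1 + 1) :=
    le_of_pow_le_pow_mul
      (pow_nonneg (pow_nonneg (mul_nonneg (le_of_lt hθ0) (le_of_lt (lt_of_lt_of_le hμpos (le_refl _)))) m) _)
      (pow_nonneg hq0 _) hCe main
  exact le_of_pow_le_pow_left₀ (by omega) hq0 h5

end MaxAlg

namespace MaxAlg
/-- for any norm and any m ≥ 1,
(sup_{A ∈ Ψ^m} μ(A))^{1/m} ≤ μ(Ψ) ≤ (sup_{A ∈ Ψ^m} η(A))^{1/m}. -/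
theorem upper_lower_bounds {n : ℕ} (Ψ : Set (Fin n → Fin n → ℝ))
    (hb : Bornology.IsBounded Ψ) (hΨ : ∀ A ∈ Ψ, ∀ i j, 0 ≤ A i j)
    (N : NormOn n) (m : ℕ) (hm : 1 ≤ m) :
    (⨆ A : prodSet Ψ m, mu A.1) ^ ((1 : ℝ) / (m : ℝ)) ≤ muSet Ψ ∧
      muSet Ψ ≤ (⨆ A : prodSet Ψ m, eta N A.1) ^ ((1 : ℝ) / (m : ℝ)) := by
  classical
  have hmR : (0 : ℝ) < (1 : ℝ) / (m : ℝ) := by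
    have : (0 : ℝ) < (m : ℝ) := by exact_mod_cast hm
    positivity
  by_cases hn : 0 < n
  case neg =>
    have hn0 : n = 0 := by omega
    subst hn0
    have hmu0 : ∀ X : Fin 0 → Fin 0 → ℝ, mu X = 0 := fun X => Real.iSup_of_isEmpty _
    have hmuSet : muSet Ψ = 0 := hmu0 _
    have hEmpty : IsEmpty {x : Fin 0 → ℝ // (∀ i, 0 ≤ x i) ∧ x ≠ 0} :=
      ⟨fun x => x.2.2 (funext fun i => i.elim0)⟩
    have heta0 : ∀ X : Fin 0 → Fin 0 → ℝ, eta N X = 0 := fun X => Real.iSup_of_isEmpty _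
    have e1 : (⨆ A : prodSet Ψ m, mu A.1) = 0 := by
      by_cases hP : Nonempty (prodSet Ψ m)
      · rw [show (fun A : prodSet Ψ m => mu A.1) = fun _ => (0 : ℝ) from
          funext fun A => hmu0 _]
        exact ciSup_const
      · have : IsEmpty (prodSet Ψ m) := not_nonempty_iff.mp hP
        exact Real.iSup_of_isEmpty _
    have e2 : (⨆ A : prodSet Ψ m, eta N A.1) = 0 := by
      by_cases hP : Nonempty (prodSet Ψ m)
      · rw [show (fun A : prodSet Ψ m => eta N A.1) = fun _ => (0 : ℝ) from
          funext fun A => heta0 _]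
        exact ciSup_const
      · have : IsEmpty (prodSet Ψ m) := not_nonempty_iff.mp hP
        exact Real.iSup_of_isEmpty _
    rw [hmuSet, e1, e2, Real.zero_rpow hmR.ne']
    exact ⟨le_refl 0, le_refl 0⟩
  case pos =>
  by_cases hne : Ψ.Nonempty
  case neg =>
    have hΨe : Ψ = ∅ := Set.not_nonempty_iff_eq_empty.mp hne
    subst hΨe
    have hPe : IsEmpty (prodSet (∅ : Set (Fin n → Fin n → ℝ)) m) := by
      obtain ⟨m', rfl⟩ : ∃ m', m = m' + 1 := ⟨m - 1, by omega⟩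
      refine ⟨fun A => ?_⟩
      obtain ⟨A', hA', -⟩ := A.2
      exact hA'
    have e1 : (⨆ A : prodSet (∅ : Set (Fin n → Fin n → ℝ)) m, mu A.1) = 0 :=
      Real.iSup_of_isEmpty _
    have e2 : (⨆ A : prodSet (∅ : Set (Fin n → Fin n → ℝ)) m, eta N A.1) = 0 :=
      Real.iSup_of_isEmpty _
    have hS0 : ∀ i j, Ssup (∅ : Set (Fin n → Fin n → ℝ)) i j = 0 := by
      intro i j
      simp [Ssup, Real.sSup_empty]
    have hmu0 : muSet (∅ : Set (Fin n → Fin n → ℝ)) = 0 := by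
      refine le_antisymm ?_ (mu_nonneg hn fun i j => le_of_eq (hS0 i j).symm)
      refine mu_le hn fun k c => ?_
      have hz : ∏ j : Fin (k.1 + 1), Ssup (∅ : Set (Fin n → Fin n → ℝ)) (c.1 j) (c.1 (j + 1))
          = 0 := Finset.prod_eq_zero (Finset.mem_univ (0 : Fin (k.1 + 1))) (hS0 _ _)
      rw [hz, Real.zero_rpow (ne_of_gt (by positivity))]
    rw [e1, e2, hmu0, Real.zero_rpow hmR.ne']
    exact ⟨le_refl 0, le_refl 0⟩
  case pos =>
  obtain ⟨r, hr1, hrb⟩ := bound_of_isBounded hb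
  obtain ⟨C, hCpos, hC⟩ := coord_bound N
  obtain ⟨A0, hA0⟩ := hne
  have hne' : Ψ.Nonempty := ⟨A0, hA0⟩
  have hSnn : ∀ i j, 0 ≤ Ssup Ψ i j := fun i j =>
    le_trans (hΨ A0 hA0 i j) (le_Ssup hrb hA0 i j)
  have hre : ∀ A ∈ Ψ, ∀ i j, A i j ≤ r := fun A hA i j => (abs_le.mp (hrb A hA i j)).2
  have hPne : Nonempty (prodSet Ψ m) :=
    ⟨⟨chain (fun _ => A0) 0 m, chain_mem (fun _ => hA0) m 0⟩⟩
  have hqbd : ∀ B ∈ prodSet Ψ m, eta N B ≤ r ^ m * C * ∑ i, N.f (eVec i) := fun B hB =>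
    eta_le_bound N hn (prodSet_nonneg hΨ m B hB) (prodSet_entry_le hΨ hr1 hre m B hB) hC
  have hq_bdd : BddAbove (Set.range fun A : prodSet Ψ m => eta N A.1) := by
    refine ⟨r ^ m * C * ∑ i, N.f (eVec i), ?_⟩
    rintro y ⟨A, rfl⟩
    exact hqbd A.1 A.2
  have hq_le : ∀ B ∈ prodSet Ψ m, eta N B ≤ ⨆ A : prodSet Ψ m, eta N A.1 := fun B hB =>
    le_ciSup hq_bdd (⟨B, hB⟩ : prodSet Ψ m)
  have hq0 : 0 ≤ ⨆ A : prodSet Ψ m, eta N A.1 := by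
    obtain ⟨B⟩ := hPne
    exact le_trans (eta_nonneg N hn (prodSet_nonneg hΨ m B.1 B.2)
      (prodSet_entry_le hΨ hr1 hre m B.1 B.2) hC) (hq_le B.1 B.2)
  constructor
  · have hub : ∀ A : prodSet Ψ m, mu A.1 ≤ mu (Ssup Ψ) ^ m := fun A =>
      mu_prod_le hn hΨ hrb hm A.2
    have hT : (⨆ A : prodSet Ψ m, mu A.1) ≤ mu (Ssup Ψ) ^ m := ciSup_le hub
    have hT0 : 0 ≤ ⨆ A : prodSet Ψ m, mu A.1 := by
      obtain ⟨B⟩ := hPne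
      refine le_trans (mu_nonneg hn (prodSet_nonneg hΨ m B.1 B.2))
        (le_ciSup (f := fun A : prodSet Ψ m => mu A.1) ⟨mu (Ssup Ψ) ^ m, ?_⟩ B)
      rintro y ⟨A, rfl⟩
      exact hub A
    show (⨆ A : prodSet Ψ m, mu A.1) ^ ((1 : ℝ) / (m : ℝ)) ≤ mu (Ssup Ψ)
    exact rpow_le_of_le_pow hT0 (mu_nonneg hn hSnn) (by omega) hT
  · have hkey : mu (Ssup Ψ) ^ m ≤ ⨆ A : prodSet Ψ m, eta N A.1 :=
      mu_pow_le_q N hn hne' hΨ hr1 hrb hCpos hC hm hq_le hq0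
    show mu (Ssup Ψ) ≤ (⨆ A : prodSet Ψ m, eta N A.1) ^ ((1 : ℝ) / (m : ℝ))
    calc mu (Ssup Ψ) = ((mu (Ssup Ψ)) ^ m) ^ ((1 : ℝ) / (m : ℝ)) :=
          (pow_rpow_inv_nat (mu_nonneg hn hSnn) (by omega)).symm
      _ ≤ (⨆ A : prodSet Ψ m, eta N A.1) ^ ((1 : ℝ) / (m : ℝ)) :=
          Real.rpow_le_rpow (pow_nonneg (mu_nonneg hn hSnn) m) hkey (le_of_lt hmR)


end MaxAlg
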